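/- arXiv:2301.09053 — 6 statements merged into one kernel-verified Lean document; each statement's English description precedes it below -/
import Mathlib

section
/- Let α, β be real numbers with α ≠ 0, and let 0 < ε < 1/2. Then the Lebesgue measure of the set {t ∈ [0,T] : ‖αt + β‖ ≤ ε} equals 2ε(T + O(1/|α|)), where ‖·‖ denotes distance to the nearest integer. More precisely, |μ({t ∈ [0,T] : ‖αt+β‖ ≤ ε}) − 2εT| ≤ 4ε/|α| + 2ε·min(T, 1/|α|). -/
/-!
Substituting `x = α * t + β` scales measure by `|α|` and turns the set into
`{x | ‖x‖ ≤ ε} ∩ [[β, α * T + β]]`, an interval of length `L = |α| * T`. Since `round` minimises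
the distance to `ℤ`, `{x | ‖x‖ ≤ ε}` is the union of the intervals `[n - ε, n + ε]`, `n ∈ ℤ`,
pairwise disjoint when `ε < 1/2`. An interval of length `L` meets at most `L + 2ε + 1` of them and
contains at least `L - 2ε - 1`, so its intersection with the union has measure `2εL` up to
`2ε(2ε + 1) ≤ 4ε`.
-/

open MeasureTheory

/-- distance to the nearest integer -/
noncomputable def nint (x : ℝ) : ℝ := |x - round x|

open Set Function

lemma nint_le_iff {x ε : ℝ} : nint x ≤ ε ↔ ∃ n : ℤ, |x - n| ≤ ε :=
  ⟨fun h => ⟨round x, h⟩, fun ⟨n, hn⟩ => (round_le x n).trans hn⟩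

lemma setOf_nint_le (ε : ℝ) : {x | nint x ≤ ε} = ⋃ n : ℤ, Icc ((n : ℝ) - ε) (n + ε) := by
  ext x
  simp only [mem_ofPred_eq, nint_le_iff, abs_sub_le_iff, mem_iUnion, mem_Icc]
  refine exists_congr fun n => ?_
  constructor <;> rintro ⟨h₁, h₂⟩ <;> constructor <;> linarith

lemma pairwise_disjoint_Icc_intCast_sub_add {ε : ℝ} (hε : ε < 1 / 2) :
    Pairwise (Disjoint on fun n : ℤ => Icc ((n : ℝ) - ε) (n + ε)) := by
  intro m n hmn
  refine disjoint_left.mpr fun x hm hn => hmn ?_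
  have : |((m - n : ℤ) : ℝ)| < 1 := by
    rw [abs_lt]; push_cast; constructor <;> linarith [hm.1, hm.2, hn.1, hn.2]
  exact sub_eq_zero.mp (Int.abs_lt_one_iff.mp (by exact_mod_cast this))

lemma card_Icc_ceil_floor_eq_max (x y : ℝ) :
    ((Finset.Icc ⌈x⌉ ⌊y⌋).card : ℝ) = max ((⌊y⌋ : ℝ) + 1 - ⌈x⌉) 0 := by
  rw [Int.card_Icc]
  exact_mod_cast congrArg (Int.cast : ℤ → ℝ) (Int.toNat_eq_max _)

lemma card_Icc_ceil_floor_le {x y : ℝ} (h : x ≤ y + 1) :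
    ((Finset.Icc ⌈x⌉ ⌊y⌋).card : ℝ) ≤ y - x + 1 := by
  rw [card_Icc_ceil_floor_eq_max]
  exact max_le (by linarith [Int.floor_le y, Int.le_ceil x]) (by linarith)

lemma sub_sub_one_le_card_Icc_ceil_floor (x y : ℝ) :
    y - x - 1 ≤ ((Finset.Icc ⌈x⌉ ⌊y⌋).card : ℝ) := by
  rw [card_Icc_ceil_floor_eq_max]
  exact le_max_of_le_left (by linarith [Int.lt_floor_add_one y, Int.ceil_lt_add_one x])

section

variable {ε a b : ℝ}

lemma measureReal_Icc_sub_add (x : ℝ) (hε : 0 ≤ ε) :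
    volume.real (Icc (x - ε) (x + ε)) = 2 * ε := by
  rw [Real.volume_real_Icc_of_le (by linarith)]; ring

lemma measureReal_setOf_nint_le_inter_Icc_le (hε : 0 ≤ ε) (hab : a ≤ b) :
    volume.real ({x | nint x ≤ ε} ∩ Icc a b) ≤ 2 * ε * (b - a + 2 * ε + 1) := by
  set s := Finset.Icc ⌈a - ε⌉ ⌊b + ε⌋
  have hcover : {x | nint x ≤ ε} ∩ Icc a b ⊆ ⋃ n ∈ s, Icc ((n : ℝ) - ε) (n + ε) := by
    rintro x ⟨hx, hxa, hxb⟩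
    obtain ⟨n, hn⟩ := mem_iUnion.mp ((setOf_nint_le ε).subset hx)
    refine mem_biUnion (Finset.mem_Icc.mpr ⟨?_, ?_⟩) hn
    · exact Int.ceil_le.mpr (by linarith [hn.2])
    · exact Int.le_floor.mpr (by linarith [hn.1])
  calc volume.real ({x | nint x ≤ ε} ∩ Icc a b)
      ≤ ∑ n ∈ s, volume.real (Icc ((n : ℝ) - ε) (n + ε)) :=
        (measureReal_mono hcover
          (measure_biUnion_lt_top s.finite_toSet fun _ _ => measure_Icc_lt_top).ne).trans
          (measureReal_biUnion_finset_le _ _)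
    _ = 2 * ε * s.card := by
        simp only [measureReal_Icc_sub_add _ hε, Finset.sum_const, nsmul_eq_mul]; ring
    _ ≤ 2 * ε * (b - a + 2 * ε + 1) := by
        gcongr
        linarith [card_Icc_ceil_floor_le (by linarith : a - ε ≤ b + ε + 1)]

lemma le_measureReal_setOf_nint_le_inter_Icc (hε0 : 0 ≤ ε) (hε : ε < 1 / 2) :
    2 * ε * (b - a - 2 * ε - 1) ≤ volume.real ({x | nint x ≤ ε} ∩ Icc a b) := by
  set s := Finset.Icc ⌈a + ε⌉ ⌊b - ε⌋
  have hsub : ⋃ n ∈ s, Icc ((n : ℝ) - ε) (n + ε) ⊆ {x | nint x ≤ ε} ∩ Icc a b := by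
    intro x hx
    obtain ⟨n, hn, hx⟩ := mem_iUnion₂.mp hx
    have hna : a + ε ≤ n := Int.ceil_le.mp (Finset.mem_Icc.mp hn).1
    have hnb : (n : ℝ) ≤ b - ε := Int.le_floor.mp (Finset.mem_Icc.mp hn).2
    refine ⟨(setOf_nint_le ε).superset (mem_iUnion.mpr ⟨n, hx⟩), ?_, ?_⟩ <;> linarith [hx.1, hx.2]
  calc 2 * ε * (b - a - 2 * ε - 1)
      ≤ 2 * ε * s.card := by
        gcongr
        linarith [sub_sub_one_le_card_Icc_ceil_floor (a + ε) (b - ε)]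
    _ = ∑ n ∈ s, volume.real (Icc ((n : ℝ) - ε) (n + ε)) := by
        simp only [measureReal_Icc_sub_add _ hε0, Finset.sum_const, nsmul_eq_mul]; ring
    _ = volume.real (⋃ n ∈ s, Icc ((n : ℝ) - ε) (n + ε)) :=
        (measureReal_biUnion_finset ((pairwise_disjoint_Icc_intCast_sub_add hε).set_pairwise _)
          (fun _ _ => measurableSet_Icc) fun _ _ => measure_Icc_lt_top.ne).symm
    _ ≤ volume.real ({x | nint x ≤ ε} ∩ Icc a b) :=
        measureReal_mono hsub (measure_inter_lt_top_of_right_ne_top measure_Icc_lt_top.ne).ne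

lemma abs_measureReal_setOf_nint_le_inter_uIcc_sub_le (hε0 : 0 ≤ ε) (hε : ε < 1 / 2) :
    |volume.real ({x | nint x ≤ ε} ∩ uIcc a b) - 2 * ε * (|b - a|)| ≤ 4 * ε := by
  have hlen : |b - a| = max a b - min a b := by rw [max_sub_min_eq_abs]
  have hup := measureReal_setOf_nint_le_inter_Icc_le hε0 (min_le_max (a := a) (b := b))
  have hlow := le_measureReal_setOf_nint_le_inter_Icc hε0 hε (a := min a b) (b := max a b)
  rw [uIcc, hlen, abs_le]
  constructor <;> nlinarith

end

lemma measureReal_preimage_mul_add {α : ℝ} (β : ℝ) (hα : α ≠ 0) (s : Set ℝ) :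
    volume.real ((fun t => α * t + β) ⁻¹' s) = |α|⁻¹ * volume.real s := by
  rw [show (fun t => α * t + β) = (· + β) ∘ (α * ·) from rfl, preimage_comp, measureReal_def,
    Real.volume_preimage_mul_left hα, measure_preimage_add_right, ENNReal.toReal_mul,
    ENNReal.toReal_ofReal (abs_nonneg _), abs_inv, measureReal_def]

lemma preimage_mul_add_uIcc {α : ℝ} (β T : ℝ) (hα : α ≠ 0) :
    (fun t => α * t + β) ⁻¹' uIcc β (α * T + β) = uIcc 0 T := by
  rw [show (fun t => α * t + β) = (· + β) ∘ (α * ·) from rfl, preimage_comp]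
  simp [hα]

theorem stmt0 (α β ε T : ℝ) (hα : α ≠ 0) (hε0 : 0 < ε) (hε : ε < 1/2) (hT : 0 ≤ T) :
    |(volume {t : ℝ | t ∈ Set.Icc 0 T ∧ nint (α * t + β) ≤ ε}).toReal - 2 * ε * T|
      ≤ 4 * ε / |α| + 2 * ε * min T (1 / |α|) := by
  have hset : {t : ℝ | t ∈ Icc 0 T ∧ nint (α * t + β) ≤ ε}
      = (fun t => α * t + β) ⁻¹' ({x | nint x ≤ ε} ∩ uIcc β (α * T + β)) := by
    rw [preimage_inter, preimage_mul_add_uIcc β T hα, uIcc_of_le hT, inter_comm]; rfl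
  have hlen : |α * T + β - β| = |α| * T := by rw [add_sub_cancel_right, abs_mul, abs_of_nonneg hT]
  have hmain : |volume.real ({x | nint x ≤ ε} ∩ uIcc β (α * T + β)) - 2 * ε * (|α| * T)| ≤ 4 * ε :=
    hlen ▸ abs_measureReal_setOf_nint_le_inter_uIcc_sub_le hε0.le hε
  calc |volume.real {t : ℝ | t ∈ Icc 0 T ∧ nint (α * t + β) ≤ ε} - 2 * ε * T|
      = |α|⁻¹ * |volume.real ({x | nint x ≤ ε} ∩ uIcc β (α * T + β)) - 2 * ε * (|α| * T)| := by
        have hscale (X : ℝ) : |α|⁻¹ * X - 2 * ε * T = |α|⁻¹ * (X - 2 * ε * (|α| * T)) := by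
          field_simp
        rw [hset, measureReal_preimage_mul_add β hα, hscale, abs_mul, abs_inv, abs_abs]
    _ ≤ |α|⁻¹ * (4 * ε) := by gcongr
    _ ≤ 4 * ε / |α| + 2 * ε * min T (1 / |α|) := by
        rw [inv_mul_eq_div]
        exact le_add_of_nonneg_right (mul_nonneg (by positivity) (le_min hT (by positivity)))
end

section
/- Let r be a positive integer and a, b, Δ real numbers with 0 < Δ < 1/2 and Δ ≤ b − a ≤ 1 − Δ. There exists a 1-periodic function Ψ : ℝ → ℝ such that Ψ(x) = 1 for a + Δ/2 ≤ x ≤ b − Δ/2, Ψ(x) = 0 for b + Δ/2 ≤ x ≤ 1 + a − Δ/2, 0 ≤ Ψ(x) ≤ 1 everywhere, and Ψ has a Fourier expansion Ψ(x) = Σ_{m∈ℤ} a_m e(mx) with a₀ = b − a, |a_m| ≤ 2(b−a), |a_m| ≤ 2/(π|m|), and |a_m| ≤ (2/(π|m|))·(r/(π|m|Δ))^r for all m ≠ 0. -/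
/-!
`Ψ` is obtained from the `1`-periodic indicator of `[a, b)` by applying `r` times the averaging
operator `f ↦ (x ↦ (2h)⁻¹ ∫_{x-h}^{x+h} f)` with `h = Δ / (2r)`. Each averaging step keeps the
values in `[0, 1]`, shrinks the intervals where the function is constantly `1` or `0` by `h` at
each end (in total by `r h = Δ / 2`), and multiplies the `m`-th Fourier coefficient by
`sin (2πmh) / (2πmh)`, of modulus at most `min 1 (1 / (2π|m|h))`. The indicator has coefficients
`∫_a^b e(-mx) dx`, of modulus at most `min (b - a) (1 / (π|m|))`, which gives all the bounds. For
`r ≥ 1` the coefficients are `O(1/m²)`, so the Fourier series of the continuous function `Ψ`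
converges to it everywhere.
-/

noncomputable def e (x : ℝ) : ℂ := Complex.exp (2 * Real.pi * Complex.I * x)

open MeasureTheory Set Function Real

namespace Vinogradov

lemma e_add (x y : ℝ) : e (x + y) = e x * e y := by
  simp only [e, ← Complex.exp_add]
  push_cast
  ring_nf

lemma norm_e (x : ℝ) : ‖e x‖ = 1 := by
  rw [e, show 2 * π * Complex.I * x = ((2 * π * x : ℝ) : ℂ) * Complex.I by push_cast; ring,
    Complex.norm_exp_ofReal_mul_I]

lemma e_intCast (n : ℤ) : e n = 1 := by
  rw [e, ← Complex.exp_int_mul_two_pi_mul_I n]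
  push_cast
  ring_nf

lemma e_zero : e 0 = 1 := by exact_mod_cast e_intCast 0

lemma continuous_e : Continuous e := by
  unfold e
  fun_prop

lemma integral_e_mul {ξ : ℝ} (hξ : ξ ≠ 0) (u v : ℝ) :
    ∫ s in u..v, e (ξ * s) = (e (ξ * v) - e (ξ * u)) / (2 * π * Complex.I * ξ) := by
  have hc : 2 * π * Complex.I * ξ ≠ 0 := by simp [hξ, pi_ne_zero]
  simp only [e]
  push_cast
  simp_rw [← mul_assoc]
  exact integral_exp_mul_complex hc

lemma norm_integral_e_mul_le {ξ : ℝ} (hξ : ξ ≠ 0) (u v : ℝ) :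
    ‖∫ s in u..v, e (ξ * s)‖ ≤ 1 / (π * |ξ|) := by
  have hξ' : 0 < |ξ| := abs_pos.mpr hξ
  rw [integral_e_mul hξ, norm_div]
  have hden : ‖2 * π * Complex.I * ξ‖ = 2 * π * |ξ| := by
    simp [abs_of_pos pi_pos]
  rw [hden, div_le_div_iff₀ (by positivity) (by positivity)]
  have hnum : ‖e (ξ * v) - e (ξ * u)‖ ≤ 2 := by
    simpa only [norm_e, one_add_one_eq_two] using norm_sub_le (e (ξ * v)) (e (ξ * u))
  nlinarith [mul_le_mul_of_nonneg_right hnum (by positivity : 0 ≤ π * |ξ|)]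

lemma periodic_e_neg_mul_mul {f : ℝ → ℝ} (hp : Periodic f 1) (m : ℤ) :
    Periodic (fun x => e (-(m * x)) * f x) 1 := by
  intro x
  simp only [hp x, mul_add, neg_add, mul_one, e_add, ← Int.cast_neg, e_intCast]

lemma intervalIntegrable_of_bound {E : Type*} [NormedAddCommGroup E] {g : ℝ → E}
    (hg : AEStronglyMeasurable g) {C : ℝ} (hb : ∀ x, ‖g x‖ ≤ C) (u v : ℝ) :
    IntervalIntegrable g volume u v :=
  ⟨.of_bound measure_Ioc_lt_top hg.restrict C (ae_of_all _ hb),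
    .of_bound measure_Ioc_lt_top hg.restrict C (ae_of_all _ hb)⟩

lemma intervalIntegral_integral_swap_of_bound {E : Type*} [NormedAddCommGroup E] [NormedSpace ℝ E]
    {F : ℝ → ℝ → E} (hF : AEStronglyMeasurable (uncurry F)) {C : ℝ} (hb : ∀ x s, ‖F x s‖ ≤ C)
    {u v u' v' : ℝ} (huv : u ≤ v) (huv' : u' ≤ v') :
    ∫ x in u..v, ∫ s in u'..v', F x s = ∫ s in u'..v', ∫ x in u..v, F x s := by
  simp only [intervalIntegral.integral_of_le huv, intervalIntegral.integral_of_le huv']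
  have hF' : AEStronglyMeasurable (uncurry F)
      ((volume.restrict (Ioc u v)).prod (volume.restrict (Ioc u' v'))) := by
    rw [Measure.prod_restrict]
    exact hF.restrict
  exact integral_integral_swap (Integrable.of_bound hF' C (ae_of_all _ fun p => hb p.1 p.2))

noncomputable def localAverage (h : ℝ) (f : ℝ → ℝ) (x : ℝ) : ℝ :=
  (2 * h)⁻¹ * ∫ t in (x - h)..(x + h), f t

section LocalAverage

variable {h C : ℝ} {f : ℝ → ℝ}

lemma continuous_localAverage (hf : ∀ u v, IntervalIntegrable f volume u v) :
    Continuous (localAverage h f) := by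
  have hF := intervalIntegral.continuous_primitive hf 0
  have hsplit : localAverage h f =
      fun x => (2 * h)⁻¹ * ((∫ t in (0 : ℝ)..(x + h), f t) - ∫ t in (0 : ℝ)..(x - h), f t) := by
    ext x
    rw [localAverage, intervalIntegral.integral_interval_sub_left (hf _ _) (hf _ _)]
  rw [hsplit]
  fun_prop

lemma localAverage_nonneg (hh : 0 < h) (hf : ∀ x, 0 ≤ f x) (x : ℝ) : 0 ≤ localAverage h f x :=
  mul_nonneg (by positivity) (intervalIntegral.integral_nonneg (by linarith) fun t _ => hf t)

lemma abs_localAverage_le (hh : 0 < h) (hb : ∀ x, |f x| ≤ C) (x : ℝ) :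
    |localAverage h f x| ≤ C := by
  have hint : ‖∫ t in (x - h)..(x + h), f t‖ ≤ C * |x + h - (x - h)| :=
    intervalIntegral.norm_integral_le_of_norm_le_const fun t _ => hb t
  rw [show x + h - (x - h) = 2 * h by ring, abs_of_pos (by positivity), Real.norm_eq_abs] at hint
  rw [localAverage, abs_mul, abs_of_pos (by positivity)]
  calc (2 * h)⁻¹ * |∫ t in (x - h)..(x + h), f t| ≤ (2 * h)⁻¹ * (C * (2 * h)) := by gcongr
    _ = C := by field_simp

lemma periodic_localAverage {T : ℝ} (hp : Periodic f T) :
    Periodic (localAverage h f) T := by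
  intro x
  have hshift : ∫ t in (x - h)..(x + h), f t = ∫ t in (x - h + T)..(x + h + T), f t := by
    rw [← intervalIntegral.integral_comp_add_right]
    exact intervalIntegral.integral_congr fun t _ => (hp t).symm
  rw [localAverage, localAverage, hshift, sub_add_eq_add_sub, add_right_comm]

lemma localAverage_eq_of_eqOn (hh : 0 < h) {c x : ℝ}
    (hf : EqOn f (fun _ => c) (Ioo (x - h) (x + h))) :
    localAverage h f x = c := by
  rw [localAverage, intervalIntegral.integral_congr_Ioo_of_le (by linarith) hf,
    intervalIntegral.integral_const, smul_eq_mul]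
  field_simp
  ring

end LocalAverage

noncomputable def averageMultiplier (h : ℝ) (m : ℤ) : ℂ :=
  ((2 * h)⁻¹ : ℝ) * ∫ s in (-h)..h, e (m * s)

section Multiplier

variable {h : ℝ}

lemma averageMultiplier_zero (hh : h ≠ 0) : averageMultiplier h 0 = 1 := by
  simp only [averageMultiplier, Int.cast_zero, zero_mul, e_zero, intervalIntegral.integral_const,
    Complex.real_smul, mul_one]
  norm_cast
  field_simp
  ring

lemma norm_averageMultiplier_le_one (hh : 0 < h) (m : ℤ) : ‖averageMultiplier h m‖ ≤ 1 := by
  have hint : ‖∫ s in (-h)..h, e (m * s)‖ ≤ 1 * |h - -h| :=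
    intervalIntegral.norm_integral_le_of_norm_le_const fun s _ => (norm_e _).le
  rw [one_mul, sub_neg_eq_add, ← two_mul, abs_of_pos (by positivity)] at hint
  rw [averageMultiplier, norm_mul, Complex.norm_real, Real.norm_of_nonneg (by positivity)]
  calc (2 * h)⁻¹ * ‖∫ s in (-h)..h, e (m * s)‖ ≤ (2 * h)⁻¹ * (2 * h) := by gcongr
    _ = 1 := inv_mul_cancel₀ (by positivity)

lemma norm_averageMultiplier_le (hh : 0 < h) {m : ℤ} (hm : m ≠ 0) :
    ‖averageMultiplier h m‖ ≤ 1 / (2 * π * |(m : ℝ)| * h) := by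
  rw [averageMultiplier, norm_mul, Complex.norm_real, Real.norm_of_nonneg (by positivity)]
  calc (2 * h)⁻¹ * ‖∫ s in (-h)..h, e (m * s)‖ ≤ (2 * h)⁻¹ * (1 / (π * |(m : ℝ)|)) := by
        gcongr
        exact norm_integral_e_mul_le (by exact_mod_cast hm) _ _
    _ = 1 / (2 * π * |(m : ℝ)| * h) := by field_simp

end Multiplier

noncomputable def fourierCoeffUnit (f : ℝ → ℝ) (m : ℤ) : ℂ := ∫ x in (0 : ℝ)..1, e (-(m * x)) * f x

section FourierCoeff

variable {f : ℝ → ℝ}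

lemma fourierCoeffUnit_eq_integral_add (hp : Periodic f 1) (m : ℤ) (s : ℝ) :
    fourierCoeffUnit f m = ∫ x in s..s + 1, e (-(m * x)) * f x := by
  rw [fourierCoeffUnit]
  simpa only [zero_add] using (periodic_e_neg_mul_mul hp m).intervalIntegral_add_eq 0 s

lemma fourierCoeffUnit_comp_add_right (hp : Periodic f 1) (m : ℤ) (s : ℝ) :
    fourierCoeffUnit (fun x => f (x + s)) m = e (m * s) * fourierCoeffUnit f m := by
  have hpt : ∀ x : ℝ, e (-(m * x)) * f (x + s) = e (m * s) * (e (-(m * (x + s))) * f (x + s)) := by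
    intro x
    rw [← mul_assoc, ← e_add]
    ring_nf
  rw [fourierCoeffUnit_eq_integral_add hp m s, fourierCoeffUnit]
  simp only [hpt, intervalIntegral.integral_const_mul,
    intervalIntegral.integral_comp_add_right (fun x => e (-(m * x)) * f x), zero_add, add_comm 1 s]

lemma fourierCoeffUnit_localAverage {h C : ℝ} (hh : 0 < h) (hf : Measurable f) (hb : ∀ x, |f x| ≤ C)
    (hp : Periodic f 1) (m : ℤ) :
    fourierCoeffUnit (localAverage h f) m = averageMultiplier h m * fourierCoeffUnit f m := by
  set G : ℝ → ℝ → ℂ := fun x s => e (-(m * x)) * f (x + s)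
  have hG : AEStronglyMeasurable (uncurry G) := by
    refine (Measurable.mul ?_ ?_).aestronglyMeasurable
    · exact continuous_e.measurable.comp (by fun_prop)
    · exact Complex.measurable_ofReal.comp (hf.comp (by fun_prop))
  have hGb : ∀ x s, ‖G x s‖ ≤ C := fun x s => by
    simpa only [G, norm_mul, norm_e, one_mul, Complex.norm_real, Real.norm_eq_abs] using hb (x + s)
  have hpt : ∀ x : ℝ,
      e (-(m * x)) * localAverage h f x = ((2 * h)⁻¹ : ℝ) * ∫ s in (-h)..h, G x s := by
    intro x
    have hshift : ∫ t in (x - h)..(x + h), f t = ∫ s in (-h)..h, f (x + s) := by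
      rw [intervalIntegral.integral_comp_add_left, ← sub_eq_add_neg]
    rw [localAverage, hshift, Complex.ofReal_mul, ← intervalIntegral.integral_ofReal,
      mul_left_comm, ← intervalIntegral.integral_const_mul]
  calc fourierCoeffUnit (localAverage h f) m
      = ((2 * h)⁻¹ : ℝ) * ∫ x in (0 : ℝ)..1, ∫ s in (-h)..h, G x s := by
        simp only [fourierCoeffUnit, hpt, intervalIntegral.integral_const_mul]
    _ = ((2 * h)⁻¹ : ℝ) * ∫ s in (-h)..h, ∫ x in (0 : ℝ)..1, G x s := by
        rw [intervalIntegral_integral_swap_of_bound hG hGb zero_le_one (by linarith)]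
    _ = ((2 * h)⁻¹ : ℝ) * ∫ s in (-h)..h, e (m * s) * fourierCoeffUnit f m := by
        congr 1
        exact intervalIntegral.integral_congr fun s _ => fourierCoeffUnit_comp_add_right hp m s
    _ = averageMultiplier h m * fourierCoeffUnit f m := by
        rw [intervalIntegral.integral_mul_const, averageMultiplier, mul_assoc]

end FourierCoeff

section Iterate

variable {h C : ℝ} {f : ℝ → ℝ}

lemma abs_iterate_localAverage_le (hh : 0 < h) (hb : ∀ x, |f x| ≤ C) (k : ℕ) (x : ℝ) :
    |(localAverage h)^[k] f x| ≤ C := by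
  induction k generalizing x with
  | zero => exact hb x
  | succ k ih => rw [iterate_succ_apply']; exact abs_localAverage_le hh ih x

lemma iterate_localAverage_nonneg (hh : 0 < h) (hf : ∀ x, 0 ≤ f x) (k : ℕ) (x : ℝ) :
    0 ≤ (localAverage h)^[k] f x := by
  induction k generalizing x with
  | zero => exact hf x
  | succ k ih => rw [iterate_succ_apply']; exact localAverage_nonneg hh ih x

lemma periodic_iterate_localAverage {T : ℝ} (hp : Periodic f T) (k : ℕ) :
    Periodic ((localAverage h)^[k] f) T := by
  induction k with
  | zero => exact hp
  | succ k ih => rw [iterate_succ_apply']; exact periodic_localAverage ih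

lemma continuous_localAverage_of_bound (hf : Measurable f) (hb : ∀ x, |f x| ≤ C) :
    Continuous (localAverage h f) :=
  continuous_localAverage <| intervalIntegrable_of_bound hf.aestronglyMeasurable (C := C)
    fun x => (Real.norm_eq_abs _).trans_le (hb x)

lemma measurable_iterate_localAverage (hh : 0 < h) (hf : Measurable f) (hb : ∀ x, |f x| ≤ C)
    (k : ℕ) : Measurable ((localAverage h)^[k] f) := by
  induction k with
  | zero => exact hf
  | succ k ih =>
    rw [iterate_succ_apply']
    exact (continuous_localAverage_of_bound ih (abs_iterate_localAverage_le hh hb k)).measurable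

lemma continuous_iterate_localAverage (hh : 0 < h) (hf : Measurable f) (hb : ∀ x, |f x| ≤ C)
    {k : ℕ} (hk : k ≠ 0) : Continuous ((localAverage h)^[k] f) := by
  obtain ⟨j, rfl⟩ := Nat.exists_eq_succ_of_ne_zero hk
  rw [iterate_succ_apply']
  exact continuous_localAverage_of_bound (measurable_iterate_localAverage hh hf hb j)
    (abs_iterate_localAverage_le hh hb j)

lemma fourierCoeffUnit_iterate_localAverage (hh : 0 < h) (hf : Measurable f)
    (hb : ∀ x, |f x| ≤ C) (hp : Periodic f 1) (m : ℤ) (k : ℕ) :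
    fourierCoeffUnit ((localAverage h)^[k] f) m =
      averageMultiplier h m ^ k * fourierCoeffUnit f m := by
  induction k with
  | zero => rw [iterate_zero_apply, pow_zero, one_mul]
  | succ k ih =>
    rw [iterate_succ_apply', fourierCoeffUnit_localAverage hh
      (measurable_iterate_localAverage hh hf hb k) (abs_iterate_localAverage_le hh hb k)
      (periodic_iterate_localAverage hp k), ih, pow_succ', mul_assoc]

lemma iterate_localAverage_eqOn_Ioo (hh : 0 < h) {c u v : ℝ} (hf : EqOn f (fun _ => c) (Ioo u v))
    (k : ℕ) : EqOn ((localAverage h)^[k] f) (fun _ => c) (Ioo (u + k * h) (v - k * h)) := by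
  induction k with
  | zero => simpa using hf
  | succ k ih =>
    intro x hx
    rw [iterate_succ_apply']
    refine localAverage_eq_of_eqOn hh fun t ht => ih ⟨?_, ?_⟩
    · push_cast at hx; linarith [hx.1, ht.1]
    · push_cast at hx; linarith [hx.2, ht.2]

lemma iterate_localAverage_eqOn_Icc (hh : 0 < h) {c u v : ℝ} (hf : EqOn f (fun _ => c) (Ioo u v))
    {k : ℕ} (hk : k ≠ 0) :
    EqOn ((localAverage h)^[k] f) (fun _ => c) (Icc (u + k * h) (v - k * h)) := by
  obtain ⟨j, rfl⟩ := Nat.exists_eq_succ_of_ne_zero hk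
  intro x hx
  rw [iterate_succ_apply']
  refine localAverage_eq_of_eqOn hh fun t ht => iterate_localAverage_eqOn_Ioo hh hf j ⟨?_, ?_⟩
  · push_cast at hx; linarith [hx.1, ht.1]
  · push_cast at hx; linarith [hx.2, ht.2]

end Iterate

noncomputable def periodicIndicator (a b : ℝ) (x : ℝ) : ℝ :=
  if Int.fract (x - a) < b - a then 1 else 0

section PeriodicIndicator

variable {a b : ℝ}

lemma measurable_periodicIndicator : Measurable (periodicIndicator a b) :=
  Measurable.ite (measurableSet_lt (by fun_prop) measurable_const) measurable_const measurable_const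

lemma periodic_periodicIndicator : Periodic (periodicIndicator a b) 1 := by
  intro x
  rw [periodicIndicator, periodicIndicator, add_sub_right_comm, Int.fract_add_one]

lemma periodicIndicator_nonneg (x : ℝ) : 0 ≤ periodicIndicator a b x := by
  unfold periodicIndicator; split_ifs <;> norm_num

lemma abs_periodicIndicator_le_one (x : ℝ) : |periodicIndicator a b x| ≤ 1 := by
  unfold periodicIndicator; split_ifs <;> norm_num

lemma periodicIndicator_eqOn_one (hab : b - a ≤ 1) :
    EqOn (periodicIndicator a b) (fun _ => 1) (Ioo a b) := by
  intro x hx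
  rw [periodicIndicator, Int.fract_eq_self.2 ⟨by linarith [hx.1], by linarith [hx.2]⟩,
    if_pos (by linarith [hx.2])]

lemma periodicIndicator_eqOn_zero (hab : a ≤ b) :
    EqOn (periodicIndicator a b) (fun _ => 0) (Ioo b (a + 1)) := by
  intro x hx
  rw [periodicIndicator, Int.fract_eq_self.2 ⟨by linarith [hx.1], by linarith [hx.2]⟩,
    if_neg (by linarith [hx.1])]

lemma fourierCoeffUnit_periodicIndicator (hab : a ≤ b) (hba : b ≤ a + 1) (m : ℤ) :
    fourierCoeffUnit (periodicIndicator a b) m = ∫ x in a..b, e (-(m * x)) := by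
  have hint : ∀ u v,
      IntervalIntegrable (fun x => e (-(m * x)) * periodicIndicator a b x) volume u v :=
    intervalIntegrable_of_bound (C := 1)
      ((continuous_e.measurable.comp (by fun_prop)).mul
        (Complex.measurable_ofReal.comp measurable_periodicIndicator)).aestronglyMeasurable
      fun x => by simpa [norm_e] using abs_periodicIndicator_le_one x
  rw [fourierCoeffUnit_eq_integral_add periodic_periodicIndicator m a,
    ← intervalIntegral.integral_add_adjacent_intervals (hint a b) (hint b (a + 1)),
    intervalIntegral.integral_congr_Ioo_of_le (g := fun x => e (-(m * x))) hab fun x hx => by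
      simp [periodicIndicator_eqOn_one (by linarith) hx],
    intervalIntegral.integral_congr_Ioo_of_le (g := fun _ => 0) hba fun x hx => by
      simp [periodicIndicator_eqOn_zero hab hx],
    intervalIntegral.integral_zero, add_zero]

lemma fourierCoeffUnit_periodicIndicator_zero (hab : a ≤ b) (hba : b ≤ a + 1) :
    fourierCoeffUnit (periodicIndicator a b) 0 = ((b - a : ℝ) : ℂ) := by
  simp [fourierCoeffUnit_periodicIndicator hab hba, e_zero]

lemma norm_fourierCoeffUnit_periodicIndicator_le (hab : a ≤ b) (hba : b ≤ a + 1) (m : ℤ) :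
    ‖fourierCoeffUnit (periodicIndicator a b) m‖ ≤ b - a := by
  rw [fourierCoeffUnit_periodicIndicator hab hba]
  simpa [norm_e, abs_of_nonneg (sub_nonneg.2 hab)] using
    intervalIntegral.norm_integral_le_of_norm_le_const (a := a) (b := b) (C := 1)
      fun x _ => (norm_e (-(m * x))).le

lemma norm_fourierCoeffUnit_periodicIndicator_le_of_ne_zero (hab : a ≤ b) (hba : b ≤ a + 1)
    {m : ℤ} (hm : m ≠ 0) : ‖fourierCoeffUnit (periodicIndicator a b) m‖ ≤ 1 / (π * |(m : ℝ)|) := by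
  rw [fourierCoeffUnit_periodicIndicator hab hba]
  simpa only [neg_mul, Int.cast_neg, abs_neg] using
    norm_integral_e_mul_le (ξ := -m) (by exact_mod_cast neg_ne_zero.2 hm) a b

end PeriodicIndicator

lemma hasSum_fourierCoeffUnit_mul_e {f : ℝ → ℝ} (hc : Continuous f) (hp : Periodic f 1)
    (hs : Summable (fourierCoeffUnit f)) (x : ℝ) :
    HasSum (fun m : ℤ => fourierCoeffUnit f m * e (m * x)) (f x) := by
  have : Fact ((0 : ℝ) < 1) := ⟨one_pos⟩
  have hpC : Periodic (fun t => (f t : ℂ)) 1 := fun t => by simp only [hp t]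
  let F : C(AddCircle (1 : ℝ), ℂ) :=
    ⟨hpC.lift, (isQuotientMap_quotient_mk').continuous_iff.2 (Complex.continuous_ofReal.comp hc)⟩
  have hfourier : ∀ (m : ℤ) (t : ℝ), fourier m (t : AddCircle (1 : ℝ)) = e (m * t) := by
    intro m t
    rw [fourier_coe_apply, e, Complex.ofReal_one, div_one]
    push_cast
    ring_nf
  have hcoeff : fourierCoeff F = fourierCoeffUnit f := by
    ext m
    rw [fourierCoeff_eq_intervalIntegral F m 0, zero_add, div_one, one_smul, fourierCoeffUnit]
    refine intervalIntegral.integral_congr fun t _ => ?_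
    simp only [smul_eq_mul, hfourier, F, ContinuousMap.coe_mk, hpC.lift_coe, Int.cast_neg, neg_mul]
  have hsum := has_pointwise_sum_fourier_series_of_summable (hcoeff ▸ hs) (x : AddCircle (1 : ℝ))
  rw [hcoeff] at hsum
  simpa only [smul_eq_mul, hfourier, F, ContinuousMap.coe_mk, hpC.lift_coe] using hsum

noncomputable def vinogradovPsi (a b h : ℝ) (k : ℕ) : ℝ → ℝ :=
  (localAverage h)^[k] (periodicIndicator a b)

section VinogradovPsi

variable {a b h : ℝ}

lemma periodic_vinogradovPsi (k : ℕ) : Periodic (vinogradovPsi a b h k) 1 :=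
  periodic_iterate_localAverage periodic_periodicIndicator k

lemma vinogradovPsi_mem_Icc (hh : 0 < h) (k : ℕ) (x : ℝ) : vinogradovPsi a b h k x ∈ Icc 0 1 :=
  ⟨iterate_localAverage_nonneg hh periodicIndicator_nonneg k x,
    (abs_le.1 (abs_iterate_localAverage_le hh abs_periodicIndicator_le_one k x)).2⟩

lemma vinogradovPsi_eqOn_one (hh : 0 < h) (hba : b ≤ a + 1) {k : ℕ} (hk : k ≠ 0) :
    EqOn (vinogradovPsi a b h k) (fun _ => 1) (Icc (a + k * h) (b - k * h)) :=
  iterate_localAverage_eqOn_Icc hh (periodicIndicator_eqOn_one (by linarith)) hk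

lemma vinogradovPsi_eqOn_zero (hh : 0 < h) (hab : a ≤ b) {k : ℕ} (hk : k ≠ 0) :
    EqOn (vinogradovPsi a b h k) (fun _ => 0) (Icc (b + k * h) (a + 1 - k * h)) :=
  iterate_localAverage_eqOn_Icc hh (periodicIndicator_eqOn_zero hab) hk

lemma fourierCoeffUnit_vinogradovPsi (hh : 0 < h) (m : ℤ) (k : ℕ) :
    fourierCoeffUnit (vinogradovPsi a b h k) m =
      averageMultiplier h m ^ k * fourierCoeffUnit (periodicIndicator a b) m :=
  fourierCoeffUnit_iterate_localAverage hh measurable_periodicIndicator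
    abs_periodicIndicator_le_one periodic_periodicIndicator m k

lemma norm_fourierCoeffUnit_vinogradovPsi_le (hh : 0 < h) (m : ℤ) (k : ℕ) :
    ‖fourierCoeffUnit (vinogradovPsi a b h k) m‖ ≤
      ‖fourierCoeffUnit (periodicIndicator a b) m‖ := by
  rw [fourierCoeffUnit_vinogradovPsi hh, norm_mul, norm_pow]
  exact mul_le_of_le_one_left (norm_nonneg _)
    (pow_le_one₀ (norm_nonneg _) (norm_averageMultiplier_le_one hh m))

lemma norm_fourierCoeffUnit_vinogradovPsi_le_pow (hh : 0 < h) (hab : a ≤ b) (hba : b ≤ a + 1)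
    {m : ℤ} (hm : m ≠ 0) (k : ℕ) :
    ‖fourierCoeffUnit (vinogradovPsi a b h k) m‖ ≤
      (1 / (2 * π * |(m : ℝ)| * h)) ^ k * (1 / (π * |(m : ℝ)|)) := by
  rw [fourierCoeffUnit_vinogradovPsi hh, norm_mul, norm_pow]
  gcongr
  exacts [norm_averageMultiplier_le hh hm,
    norm_fourierCoeffUnit_periodicIndicator_le_of_ne_zero hab hba hm]

lemma summable_fourierCoeffUnit_vinogradovPsi (hh : 0 < h) (hab : a ≤ b) (hba : b ≤ a + 1)
    {k : ℕ} (hk : k ≠ 0) : Summable (fourierCoeffUnit (vinogradovPsi a b h k)) := by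
  have hbound : ∀ m : ℤ, m ≠ 0 →
      ‖fourierCoeffUnit (vinogradovPsi a b h k) m‖ ≤ (2 * π ^ 2 * h)⁻¹ * (1 / (m : ℝ) ^ 2) := by
    intro m hm
    have hD := norm_averageMultiplier_le_one hh m
    rw [fourierCoeffUnit_vinogradovPsi hh, norm_mul, norm_pow]
    calc ‖averageMultiplier h m‖ ^ k * ‖fourierCoeffUnit (periodicIndicator a b) m‖
        ≤ ‖averageMultiplier h m‖ * ‖fourierCoeffUnit (periodicIndicator a b) m‖ := by
          gcongr
          exact pow_le_of_le_one (norm_nonneg _) hD hk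
      _ ≤ 1 / (2 * π * |(m : ℝ)| * h) * (1 / (π * |(m : ℝ)|)) := by
          gcongr
          exacts [norm_averageMultiplier_le hh hm,
            norm_fourierCoeffUnit_periodicIndicator_le_of_ne_zero hab hba hm]
      _ = (2 * π ^ 2 * h)⁻¹ * (1 / (m : ℝ) ^ 2) := by
          rw [← sq_abs (m : ℝ)]
          field_simp
  refine Summable.of_norm_bounded_eventually
    ((Real.summable_one_div_int_pow.2 one_lt_two).mul_left (2 * π ^ 2 * h)⁻¹) ?_
  filter_upwards [Filter.eventually_cofinite_ne 0] with m hm using hbound m hm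

lemma hasSum_vinogradovPsi (hh : 0 < h) (hab : a ≤ b) (hba : b ≤ a + 1) {k : ℕ} (hk : k ≠ 0)
    (x : ℝ) :
    HasSum (fun m : ℤ => fourierCoeffUnit (vinogradovPsi a b h k) m * e (m * x))
      (vinogradovPsi a b h k x) :=
  hasSum_fourierCoeffUnit_mul_e
    (continuous_iterate_localAverage hh measurable_periodicIndicator
      abs_periodicIndicator_le_one hk)
    (periodic_vinogradovPsi k) (summable_fourierCoeffUnit_vinogradovPsi hh hab hba hk) x

end VinogradovPsi

end Vinogradov

open Vinogradov

theorem stmt5_general (r : ℕ) (hr : 0 < r) (a b Δ : ℝ) (hΔ0 : 0 < Δ)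
    (h1 : Δ ≤ b - a) (h2 : b - a ≤ 1 - Δ) :
    ∃ (Ψ : ℝ → ℝ) (c : ℤ → ℂ),
      (∀ x, Ψ (x + 1) = Ψ x) ∧
      (∀ x, a + Δ/2 ≤ x → x ≤ b - Δ/2 → Ψ x = 1) ∧
      (∀ x, b + Δ/2 ≤ x → x ≤ 1 + a - Δ/2 → Ψ x = 0) ∧
      (∀ x, 0 ≤ Ψ x ∧ Ψ x ≤ 1) ∧
      (∀ x, (Ψ x : ℂ) = ∑' m : ℤ, c m * e (m * x)) ∧
      c 0 = ((b - a : ℝ) : ℂ) ∧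
      (∀ m, ‖c m‖ ≤ 2 * (b - a)) ∧
      (∀ m : ℤ, m ≠ 0 → ‖c m‖ ≤ 2 / (Real.pi * |(m : ℝ)|)) ∧
      (∀ m : ℤ, m ≠ 0 →
        ‖c m‖ ≤ 2 / (Real.pi * |(m : ℝ)|) * ((r : ℝ) / (Real.pi * |(m : ℝ)| * Δ)) ^ r) := by
  set h := Δ / (2 * r) with h_def
  have hh : 0 < h := by positivity
  have hrh : r * h = Δ / 2 := by rw [h_def]; field_simp
  have hab : a ≤ b := by linarith
  have hba : b ≤ a + 1 := by linarith
  refine ⟨vinogradovPsi a b h r, fourierCoeffUnit (vinogradovPsi a b h r), periodic_vinogradovPsi r,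
    fun x hx₁ hx₂ => vinogradovPsi_eqOn_one hh hba hr.ne' ⟨by linarith, by linarith⟩,
    fun x hx₁ hx₂ => vinogradovPsi_eqOn_zero hh hab hr.ne' ⟨by linarith, by linarith⟩,
    vinogradovPsi_mem_Icc hh r, fun x => (hasSum_vinogradovPsi hh hab hba hr.ne' x).tsum_eq.symm,
    ?_, fun m => ?_, fun m hm => ?_, fun m hm => ?_⟩
  · rw [fourierCoeffUnit_vinogradovPsi hh, averageMultiplier_zero hh.ne', one_pow, one_mul,
      fourierCoeffUnit_periodicIndicator_zero hab hba]
  · exact ((norm_fourierCoeffUnit_vinogradovPsi_le hh m r).trans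
      (norm_fourierCoeffUnit_periodicIndicator_le hab hba m)).trans (by linarith)
  · calc _ ≤ 1 / (π * |(m : ℝ)|) := (norm_fourierCoeffUnit_vinogradovPsi_le hh m r).trans
          (norm_fourierCoeffUnit_periodicIndicator_le_of_ne_zero hab hba hm)
      _ ≤ 2 / (π * |(m : ℝ)|) := by gcongr; norm_num
  · have hscale : 1 / (2 * π * |(m : ℝ)| * h) = r / (π * |(m : ℝ)| * Δ) := by
      rw [h_def]; field_simp
    calc _ ≤ (1 / (2 * π * |(m : ℝ)| * h)) ^ r * (1 / (π * |(m : ℝ)|)) :=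
          norm_fourierCoeffUnit_vinogradovPsi_le_pow hh hab hba hm r
      _ ≤ 2 / (π * |(m : ℝ)|) * (r / (π * |(m : ℝ)| * Δ)) ^ r := by
          rw [hscale, mul_comm]; gcongr; norm_num

theorem stmt5 (r : ℕ) (hr : 0 < r) (a b Δ : ℝ) (hΔ0 : 0 < Δ) (hΔ : Δ < 1/2)
    (h1 : Δ ≤ b - a) (h2 : b - a ≤ 1 - Δ) :
    ∃ (Ψ : ℝ → ℝ) (c : ℤ → ℂ),
      (∀ x, Ψ (x + 1) = Ψ x) ∧
      (∀ x, a + Δ/2 ≤ x → x ≤ b - Δ/2 → Ψ x = 1) ∧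
      (∀ x, b + Δ/2 ≤ x → x ≤ 1 + a - Δ/2 → Ψ x = 0) ∧
      (∀ x, 0 ≤ Ψ x ∧ Ψ x ≤ 1) ∧
      (∀ x, (Ψ x : ℂ) = ∑' m : ℤ, c m * e (m * x)) ∧
      c 0 = ((b - a : ℝ) : ℂ) ∧
      (∀ m, ‖c m‖ ≤ 2 * (b - a)) ∧
      (∀ m : ℤ, m ≠ 0 → ‖c m‖ ≤ 2 / (Real.pi * |(m : ℝ)|)) ∧
      (∀ m : ℤ, m ≠ 0 →
        ‖c m‖ ≤ 2 / (Real.pi * |(m : ℝ)|) * ((r : ℝ) / (Real.pi * |(m : ℝ)| * Δ)) ^ r) :=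
  stmt5_general r hr a b Δ hΔ0 h1 h2
end

section
/- Let ρ, η > 0 be sufficiently small and r = 2, and define a'_m = min{4ρ(1+η), 2/(π|m|), (2/(π|m|))·(2/(π|m|ρη))²} for m ≠ 0 and a'_0 = 4ρ(1+η). Then Σ_{m∈ℤ} a'_m ≤ C·log((ρη)^{-1}) for an absolute constant C. -/
/-!
For `m ≠ 0` the coefficient is at most `2/(π|m|)` and, as the minimum of `b` and `b X²` with
`X = 2/(π|m|ρη)`, at most their geometric mean `b X = 4/(π² ρη m²)`. Using the first bound for
`|m| ≤ N := ⌊(ρη)⁻¹⌋` gives a harmonic sum `O(log N)`, and the second for `|m| > N` a tail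
`O((ρη N)⁻¹) = O(1)`.
-/

open Finset Real

lemma min_mul_sq_le_mul {b X : ℝ} (hb : 0 ≤ b) (hX : 0 ≤ X) : min b (b * X ^ 2) ≤ b * X := by
  rcases le_total X 1 with h | h
  · exact (min_le_right _ _).trans (mul_le_mul_of_nonneg_left (by nlinarith) hb)
  · exact (min_le_left _ _).trans (le_mul_of_one_le_right hb h)

lemma sum_range_inv_add_sq_le (N n : ℕ) :
    ∑ i ∈ range n, (((i : ℝ) + N + 1) ^ 2)⁻¹ ≤ 2 / ((N : ℝ) + 1) := by
  calc ∑ i ∈ range n, (((i : ℝ) + N + 1) ^ 2)⁻¹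
      = ∑ j ∈ Ioo N (N + 1 + n), ((j : ℝ) ^ 2)⁻¹ := by
        rw [← Finset.Ico_add_one_left_eq_Ioo, sum_Ico_eq_sum_range, Nat.add_sub_cancel_left]
        refine sum_congr rfl fun i _ => ?_
        push_cast
        ring
    _ ≤ 2 / (N + 1) := sum_Ioo_inv_sq_le N _

section

variable {g : ℕ → ℝ} {a b : ℝ}

lemma summable_of_le_div_add_one_sq (hg : ∀ n, 0 ≤ g n)
    (hb : ∀ n, g n ≤ b / ((n : ℝ) + 1) ^ 2) : Summable g := by
  have hb0 : 0 ≤ b := by simpa using (hg 0).trans (hb 0)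
  refine summable_of_sum_range_le (c := 2 * b) hg fun n => ?_
  calc ∑ i ∈ range n, g i ≤ b * ∑ i ∈ range n, (((i : ℝ) + (0 : ℕ) + 1) ^ 2)⁻¹ := by
        rw [mul_sum]
        gcongr with i
        simpa [div_eq_mul_inv] using hb i
    _ ≤ b * (2 / ((0 : ℕ) + 1)) := by gcongr; exact sum_range_inv_add_sq_le 0 n
    _ = 2 * b := by norm_num [mul_comm]

lemma tsum_le_of_le_div_of_le_div_sq (hg : ∀ n, 0 ≤ g n) (ha : ∀ n, g n ≤ a / ((n : ℝ) + 1))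
    (hb : ∀ n, g n ≤ b / ((n : ℝ) + 1) ^ 2) (N : ℕ) :
    ∑' n, g n ≤ a * (1 + log N) + 2 * b / (N + 1) := by
  have ha0 : 0 ≤ a := by simpa using (hg 0).trans (ha 0)
  have hb0 : 0 ≤ b := by simpa using (hg 0).trans (hb 0)
  rw [← (summable_of_le_div_add_one_sq hg hb).sum_add_tsum_nat_add N]
  gcongr ?_ + ?_
  · calc ∑ i ∈ range N, g i ≤ a * harmonic N := by
          rw [harmonic, Rat.cast_sum, mul_sum]
          gcongr with i
          simpa [div_eq_mul_inv] using ha i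
      _ ≤ a * (1 + log N) := by gcongr; exact harmonic_le_one_add_log N
  · refine Real.tsum_le_of_sum_range_le (fun i => hg _) fun n => ?_
    calc ∑ i ∈ range n, g (i + N) ≤ b * ∑ i ∈ range n, (((i : ℝ) + N + 1) ^ 2)⁻¹ := by
          rw [mul_sum]
          gcongr with i
          simpa [div_eq_mul_inv] using hb (i + N)
      _ ≤ b * (2 / (N + 1)) := by gcongr; exact sum_range_inv_add_sq_le N n
      _ = 2 * b / (N + 1) := by ring

end

noncomputable def fourierCoeffBound (ρ η : ℝ) (m : ℤ) : ℝ :=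
  if m = 0 then 4 * ρ * (1 + η) else
    min (min (4 * ρ * (1 + η)) (2 / (π * |(m : ℝ)|)))
      (2 / (π * |(m : ℝ)|) * (2 / (π * |(m : ℝ)| * ρ * η)) ^ 2)

namespace fourierCoeffBound

variable {ρ η : ℝ}

lemma even : (fourierCoeffBound ρ η).Even := fun m => by
  simp [fourierCoeffBound]

lemma natCast_add_one (n : ℕ) :
    fourierCoeffBound ρ η (n + 1) = min (min (4 * ρ * (1 + η)) (2 / (π * (n + 1))))
      (2 / (π * (n + 1)) * (2 / (π * (n + 1) * ρ * η)) ^ 2) := by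
  rw [fourierCoeffBound, if_neg (by omega)]
  push_cast
  rw [abs_of_pos (by positivity)]

lemma natCast_add_one_nonneg (hρ : 0 ≤ ρ) (hη : 0 ≤ η) (n : ℕ) :
    0 ≤ fourierCoeffBound ρ η (n + 1) := by
  rw [natCast_add_one]
  positivity

lemma natCast_add_one_le_div (n : ℕ) :
    fourierCoeffBound ρ η (n + 1) ≤ 2 / π / ((n : ℝ) + 1) := by
  rw [natCast_add_one, div_div]
  exact (min_le_left _ _).trans (min_le_right _ _)

lemma natCast_add_one_le_div_sq (hρ : 0 ≤ ρ) (hη : 0 ≤ η) (n : ℕ) :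
    fourierCoeffBound ρ η (n + 1) ≤ 4 / (π ^ 2 * (ρ * η)) / ((n : ℝ) + 1) ^ 2 := by
  rw [natCast_add_one]
  calc _ ≤ 2 / (π * (n + 1)) * (2 / (π * (n + 1) * ρ * η)) :=
        (min_le_min_right _ (min_le_right _ _)).trans
          (min_mul_sq_le_mul (by positivity) (by positivity))
    _ = 4 / (π ^ 2 * (ρ * η)) / ((n : ℝ) + 1) ^ 2 := by
        field_simp
        ring

lemma tsum_le (hρ : 0 ≤ ρ) (hη : 0 ≤ η) (N : ℕ) :
    ∑' m, fourierCoeffBound ρ η m ≤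
      4 * ρ * (1 + η) + 2 * (2 / π * (1 + log N) + 2 * (4 / (π ^ 2 * (ρ * η))) / (N + 1)) := by
  have hsum : Summable fun n : ℕ => fourierCoeffBound ρ η (n + 1) :=
    summable_of_le_div_add_one_sq (natCast_add_one_nonneg hρ hη) (natCast_add_one_le_div_sq hρ hη)
  rw [tsum_int_eq_zero_add_two_mul_tsum_pnat even
    (hsum.of_add_one_of_neg_add_one (hsum.congr fun n => (even _).symm)),
    tsum_pnat_eq_tsum_succ (f := fun n : ℕ => fourierCoeffBound ρ η n), fourierCoeffBound,
    if_pos rfl, nsmul_eq_mul, Nat.cast_ofNat]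
  push_cast
  gcongr
  exact tsum_le_of_le_div_of_le_div_sq (natCast_add_one_nonneg hρ hη) natCast_add_one_le_div
    (natCast_add_one_le_div_sq hρ hη) N

end fourierCoeffBound

theorem stmt7 : ∃ C ε₀ : ℝ, 0 < C ∧ 0 < ε₀ ∧ ∀ ρ η : ℝ, 0 < ρ → ρ < ε₀ → 0 < η → η < ε₀ →
    (∑' m : ℤ, (if m = 0 then 4 * ρ * (1 + η) else
      min (min (4 * ρ * (1 + η)) (2 / (Real.pi * |(m : ℝ)|)))
        (2 / (Real.pi * |(m : ℝ)|) * (2 / (Real.pi * |(m : ℝ)| * ρ * η)) ^ 2)))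
      ≤ C * Real.log (ρ * η)⁻¹ := by
  refine ⟨8, 1 / 2, by norm_num, by norm_num, fun ρ η hρ hρ' hη hη' => ?_⟩
  set L := log (ρ * η)⁻¹
  set N := ⌊(ρ * η)⁻¹⌋₊
  have h4 : 4 ≤ (ρ * η)⁻¹ := by
    rw [le_inv_comm₀ (by norm_num) (by positivity)]
    nlinarith
  have hL : 7 / 6 ≤ L := by
    have hlog4 : log 4 = 2 * log 2 := by
      rw [show (4 : ℝ) = 2 ^ 2 by norm_num, Real.log_pow]; norm_num
    linarith [Real.log_le_log (by norm_num) h4, Real.log_two_gt_d9]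
  have hhead : 2 / π * (1 + log N) ≤ 1 + L := by
    have hlogN : log N ≤ L :=
      Real.log_le_log (Nat.cast_pos.mpr (Nat.floor_pos.mpr (by linarith)))
        (Nat.floor_le (by positivity))
    have hπ : 2 / π ≤ 1 := by rw [div_le_one pi_pos]; linarith [pi_gt_three]
    calc 2 / π * (1 + log N) ≤ 1 * (1 + log N) :=
          mul_le_mul_of_nonneg_right hπ (by linarith [Real.log_natCast_nonneg N])
      _ ≤ 1 + L := by linarith
  have htail : 2 * (4 / (π ^ 2 * (ρ * η))) / (N + 1) ≤ 1 := by
    rw [div_le_one (by positivity)]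
    calc 2 * (4 / (π ^ 2 * (ρ * η))) = 8 / π ^ 2 * (ρ * η)⁻¹ := by field_simp; norm_num
      _ ≤ 1 * (ρ * η)⁻¹ := by
          gcongr
          rw [div_le_one (by positivity)]
          nlinarith [pi_gt_three]
      _ ≤ N + 1 := by linarith [Nat.lt_floor_add_one (ρ * η)⁻¹]
  have hzero : 4 * ρ * (1 + η) ≤ 3 := by nlinarith
  exact (fourierCoeffBound.tsum_le hρ.le hη.le N).trans (by linarith)
end

section
/- Let T ≫ 1, δ > 0, and x₁,…,x_N ∈ [0,T]. Suppose α ∈ ℝ satisfies αT ≥ 2/δ and |Σ_{j=1}^N e(αx_j)| ≥ δN. Then for any ε > 0 with ε < δ/C (C an absolute constant) there exists β ∈ [0,1) such that |{1 ≤ j ≤ N : ‖αx_j + β‖ ≤ ε}| ≥ 2ε(1 + δ/16)N. -/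
open Real Finset MeasureTheory

lemma nint_le_abs_sub_intCast (x : ℝ) (z : ℤ) : nint x ≤ |x - z| := round_le x z

lemma nint_mem_Icc (x : ℝ) : nint x ∈ Set.Icc (0 : ℝ) (1 / 2) := ⟨abs_nonneg _, abs_sub_round x⟩

lemma nint_sub_intCast (x : ℝ) (z : ℤ) : nint (x - z) = nint x := by
  rw [nint, nint, round_sub_intCast, Int.cast_sub]; ring_nf

lemma cos_two_pi_mul_nint (x : ℝ) : cos (2 * π * nint x) = cos (2 * π * x) := by
  rw [nint, ← abs_of_pos two_pi_pos, ← abs_mul, abs_of_pos two_pi_pos, cos_abs, mul_sub,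
    mul_comm (2 * π) (round x : ℝ), cos_sub_int_mul_two_pi]

lemma e_eq_exp_ofReal_mul_I (t : ℝ) : e t = Complex.exp ((2 * π * t : ℝ) * Complex.I) := by
  rw [e]; push_cast; ring_nf

lemma norm_e (t : ℝ) : ‖e t‖ = 1 := by
  rw [e_eq_exp_ofReal_mul_I, Complex.norm_exp_ofReal_mul_I]

lemma re_e (t : ℝ) : (e t).re = cos (2 * π * t) := by
  rw [e_eq_exp_ofReal_mul_I, Complex.exp_ofReal_mul_I_re]

lemma e_add (a b : ℝ) : e (a + b) = e a * e b := by
  rw [e, e, e, ← Complex.exp_add]; push_cast; ring_nf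

lemma e_neg_arg_div_two_pi_mul (S : ℂ) : e (-S.arg / (2 * π)) * S = ‖S‖ := by
  have h : e (-S.arg / (2 * π)) = Complex.exp (-(S.arg * Complex.I)) := by
    rw [e]; congr 1; push_cast; field_simp
  calc e (-S.arg / (2 * π)) * S
      = Complex.exp (-(S.arg * Complex.I)) * (‖S‖ * Complex.exp (S.arg * Complex.I)) := by
        rw [h, Complex.norm_mul_exp_arg_mul_I]
    _ = ‖S‖ := by rw [mul_left_comm, ← Complex.exp_add, neg_add_cancel, Complex.exp_zero, mul_one]

lemma exists_sum_cos_eq_norm_sum_e {ι : Type*} [Fintype ι] (w : ι → ℝ) :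
    ∃ φ, ∑ j, cos (2 * π * (w j + φ)) = ‖∑ j, e (w j)‖ := by
  refine ⟨-(∑ j, e (w j)).arg / (2 * π), ?_⟩
  have := congrArg Complex.re (e_neg_arg_div_two_pi_mul (∑ j, e (w j)))
  rw [mul_sum, Complex.re_sum, Complex.ofReal_re] at this
  simpa only [← e_add, add_comm, re_e] using this

lemma norm_sum_e_le_card {ι : Type*} [Fintype ι] (w : ι → ℝ) :
    ‖∑ j, e (w j)‖ ≤ Fintype.card ι :=
  (norm_sum_le _ _).trans_eq (by simp [norm_e])

lemma exists_abs_sub_center_le {ε t : ℝ} (hε : 0 < ε) {K : ℕ} (ht : |t| < K * ε) :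
    ∃ i < K, |t - (2 * i + 1 - K) * ε| ≤ ε := by
  set r := (t + K * ε) / (2 * ε)
  have hr0 : 0 ≤ r := div_nonneg (by linarith [neg_abs_le t]) (by positivity)
  have hrK : r < K := by rw [div_lt_iff₀ (by positivity)]; linarith [le_abs_self t]
  refine ⟨⌊r⌋₊, (Nat.floor_lt hr0).2 hrK, ?_⟩
  have hlo := Nat.floor_le hr0
  have hhi := Nat.lt_floor_add_one r
  have ht : t = 2 * ε * r - K * ε := by simp only [r]; field_simp; ring
  rw [abs_le]
  constructor <;> nlinarith

lemma card_nint_le_of_forall_card_nint_le {ι : Type*} [Fintype ι] (w : ι → ℝ) {ε M : ℝ}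
    (hε : 0 < ε) (h : ∀ γ, (#{j | nint (w j + γ) ≤ ε} : ℝ) ≤ 2 * ε * M) (γ : ℝ) {s : ℝ}
    (hs : 0 ≤ s) : (#{j | nint (w j + γ) ≤ s} : ℝ) ≤ 2 * (s + ε) * M := by
  classical
  set K := ⌊s / ε⌋₊ + 1
  set c : ℕ → ℝ := fun i => (2 * i + 1 - K) * ε
  have hM : 0 ≤ M := nonneg_of_mul_nonneg_right ((Nat.cast_nonneg _).trans (h 0)) (by positivity)
  have hsK : s < K * ε := by
    have := Nat.lt_floor_add_one (s / ε)
    rw [div_lt_iff₀ hε] at this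
    simpa [K] using this
  have hKs : K * ε ≤ s + ε := by
    have := Nat.floor_le (div_nonneg hs hε.le)
    rw [le_div_iff₀ hε] at this
    simp only [K]; push_cast; linarith
  have hcover : ({j | nint (w j + γ) ≤ s} : Finset ι) ⊆
      (range K).biUnion fun i => {j | nint (w j + (γ - c i)) ≤ ε} := by
    intro j hj
    obtain ⟨i, hiK, hi⟩ := exists_abs_sub_center_le hε ((mem_filter.1 hj).2.trans_lt hsK)
    refine mem_biUnion.2 ⟨i, mem_range.2 hiK, mem_filter.2 ⟨mem_univ _, ?_⟩⟩
    calc nint (w j + (γ - c i)) ≤ |w j + (γ - c i) - round (w j + γ)| :=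
          nint_le_abs_sub_intCast _ _
      _ = |w j + γ - round (w j + γ) - c i| := by ring_nf
      _ ≤ ε := hi
  calc (#{j | nint (w j + γ) ≤ s} : ℝ)
      ≤ ∑ i ∈ range K, (#{j | nint (w j + (γ - c i)) ≤ ε} : ℝ) := by
        exact_mod_cast (card_le_card hcover).trans card_biUnion_le
    _ ≤ ∑ _i ∈ range K, 2 * ε * M := sum_le_sum fun i _ => h _
    _ = K * ε * (2 * M) := by rw [sum_const, card_range, nsmul_eq_mul]; ring
    _ ≤ 2 * (s + ε) * M := by nlinarith

lemma integral_two_pi_mul_sin_two_pi_mul (a b : ℝ) :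
    ∫ s in a..b, 2 * π * sin (2 * π * s) = cos (2 * π * a) - cos (2 * π * b) := by
  rw [intervalIntegral.integral_const_mul, intervalIntegral.mul_integral_comp_mul_left,
    integral_sin]

lemma intervalIntegral.integral_indicator_Ioi {f : ℝ → ℝ} {a b c : ℝ} (h : b ∈ Set.Icc a c) :
    ∫ x in a..c, Set.indicator (Set.Ioi b) f x = ∫ x in b..c, f x := by
  rw [intervalIntegral.integral_of_le (h.1.trans h.2), intervalIntegral.integral_of_le h.2,
    MeasureTheory.integral_indicator measurableSet_Ioi, Measure.restrict_restrict measurableSet_Ioi,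
    Set.inter_comm, Set.Ioc_inter_Ioi, sup_eq_right.2 h.1]

lemma integral_mul_two_pi_mul_sin (ε M : ℝ) :
    ∫ s in (0 : ℝ)..1 / 2, 2 * (s + ε) * M * (2 * π * sin (2 * π * s)) = (1 + 4 * ε) * M := by
  have hderiv : ∀ s ∈ Set.uIcc (0 : ℝ) (1 / 2), HasDerivAt
      (fun s => M * (sin (2 * π * s) / π - 2 * (s + ε) * cos (2 * π * s)))
      (2 * (s + ε) * M * (2 * π * sin (2 * π * s))) s := by
    intro s _
    have hlin : HasDerivAt (fun s : ℝ => 2 * π * s) (2 * π) s := by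
      simpa using (hasDerivAt_id s).const_mul (2 * π)
    have := (((hasDerivAt_sin _).comp s hlin).div_const π).sub
      ((((hasDerivAt_id s).add_const ε).const_mul 2).mul ((hasDerivAt_cos _).comp s hlin))
    refine (this.const_mul M).congr_deriv ?_
    simp only [Function.comp_apply, id]
    field_simp
    ring
  rw [intervalIntegral.integral_eq_sub_of_hasDerivAt hderiv
    (Continuous.intervalIntegrable (by fun_prop) _ _)]
  have : 2 * π * (1 / 2) = π := by ring
  simp only [this, sin_pi, cos_pi, mul_zero, sin_zero, cos_zero]
  ring

lemma sum_one_add_cos_le_integral {ι : Type*} [Fintype ι] (u : ι → ℝ)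
    (hu : ∀ j, u j ∈ Set.Icc (0 : ℝ) (1 / 2)) {F : ℝ → ℝ} (hF : Continuous F)
    (hcount : ∀ s ∈ Set.Icc (0 : ℝ) (1 / 2), (#{j | u j ≤ s} : ℝ) ≤ F s) :
    ∑ j, (1 + cos (2 * π * u j)) ≤ ∫ s in (0 : ℝ)..1 / 2, F s * (2 * π * sin (2 * π * s)) := by
  set g : ℝ → ℝ := fun s => 2 * π * sin (2 * π * s)
  have hg : Continuous g := by fun_prop
  have hind : ∀ j, IntervalIntegrable ((Set.Ioi (u j)).indicator g) volume 0 (1 / 2) := fun j =>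
    (intervalIntegrable_iff_integrableOn_Ioc_of_le (by norm_num)).2
      (hg.integrableOn_Ioc.indicator measurableSet_Ioi)
  have hlayer : ∀ j,
      1 + cos (2 * π * u j) = ∫ s in (0 : ℝ)..1 / 2, (Set.Ioi (u j)).indicator g s := by
    intro j
    rw [intervalIntegral.integral_indicator_Ioi (hu j), integral_two_pi_mul_sin_two_pi_mul,
      show 2 * π * (1 / 2) = π by ring, cos_pi, sub_neg_eq_add, add_comm]
  have hpoint : ∀ s ∈ Set.Icc (0 : ℝ) (1 / 2),
      ∑ j, (Set.Ioi (u j)).indicator g s ≤ F s * g s := by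
    intro s hs
    have hg0 : 0 ≤ g s := mul_nonneg (by positivity)
      (sin_nonneg_of_nonneg_of_le_pi (by nlinarith [pi_pos, hs.1]) (by nlinarith [pi_pos, hs.2]))
    calc ∑ j, (Set.Ioi (u j)).indicator g s = (#{j | u j < s} : ℝ) * g s := by
          simp [Set.indicator_apply, sum_ite]
      _ ≤ F s * g s := by
          refine mul_le_mul_of_nonneg_right (le_trans ?_ (hcount s hs)) hg0
          exact_mod_cast card_le_card (monotone_filter_right _ fun j _ (h : u j < s) => h.le)
  calc ∑ j, (1 + cos (2 * π * u j))
      = ∫ s in (0 : ℝ)..1 / 2, ∑ j, (Set.Ioi (u j)).indicator g s := by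
        rw [intervalIntegral.integral_finsetSum fun j _ => hind j]
        exact sum_congr rfl fun j _ => hlayer j
    _ ≤ ∫ s in (0 : ℝ)..1 / 2, F s * g s :=
        intervalIntegral.integral_mono_on (by norm_num)
          (by simpa only [sum_fn] using IntervalIntegrable.sum univ fun j _ => hind j)
          ((hF.mul hg).intervalIntegrable _ _) hpoint

theorem card_add_norm_sum_e_le {ι : Type*} [Fintype ι] (w : ι → ℝ) {ε M : ℝ} (hε : 0 < ε)
    (h : ∀ γ, (#{j | nint (w j + γ) ≤ ε} : ℝ) ≤ 2 * ε * M) :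
    Fintype.card ι + ‖∑ j, e (w j)‖ ≤ (1 + 4 * ε) * M := by
  obtain ⟨φ, hφ⟩ := exists_sum_cos_eq_norm_sum_e w
  calc (Fintype.card ι : ℝ) + ‖∑ j, e (w j)‖ = ∑ j, (1 + cos (2 * π * nint (w j + φ))) := by
        simp [sum_add_distrib, cos_two_pi_mul_nint, hφ]
    _ ≤ ∫ s in (0 : ℝ)..1 / 2, 2 * (s + ε) * M * (2 * π * sin (2 * π * s)) :=
        sum_one_add_cos_le_integral _ (fun j => nint_mem_Icc _) (by fun_prop)
          fun s hs => card_nint_le_of_forall_card_nint_le w hε h φ hs.1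
    _ = (1 + 4 * ε) * M := integral_mul_two_pi_mul_sin ε M

lemma ncard_setOf_nint_add_fract_le {ι : Type*} [Fintype ι] (w : ι → ℝ) (γ s : ℝ) :
    {j | nint (w j + Int.fract γ) ≤ s}.ncard = #{j | nint (w j + γ) ≤ s} := by
  rw [Set.ncard_eq_toFinset_card', Set.toFinset_ofPred]
  simp only [Int.fract, ← add_sub_assoc, nint_sub_intCast]

theorem stmt9 : ∃ C T₀ : ℝ, 0 < C ∧ 1 ≤ T₀ ∧ ∀ (T δ ε α : ℝ) (N : ℕ) (x : Fin N → ℝ),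
    T₀ ≤ T → 0 < δ → 0 < ε → ε < δ / C →
    (∀ j, x j ∈ Set.Icc 0 T) → 2 / δ ≤ α * T →
    δ * N ≤ ‖∑ j, e (α * x j)‖ →
    ∃ β : ℝ, β ∈ Set.Ico (0 : ℝ) 1 ∧
      2 * ε * (1 + δ / 16) * N ≤ ({j : Fin N | nint (α * x j + β) ≤ ε}.ncard : ℝ) := by
  refine ⟨5, 1, by norm_num, le_rfl, fun T δ ε α N x _ hδ hε hεδ _ _ hsum => ?_⟩
  by_contra! hsparse
  have hN : (0 : ℝ) < N := by
    have := hsparse 0 ⟨le_rfl, one_pos⟩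
    exact pos_of_mul_pos_right ((Nat.cast_nonneg _).trans_lt this) (by positivity)
  have hδ1 : δ ≤ 1 := by
    have := hsum.trans (norm_sum_e_le_card _)
    rw [Fintype.card_fin] at this
    exact le_of_mul_le_mul_right (by linarith) hN
  have hkey := card_add_norm_sum_e_le (fun j => α * x j) (M := (1 + δ / 16) * N) hε fun γ => by
    have := hsparse (Int.fract γ) ⟨Int.fract_nonneg γ, Int.fract_lt_one γ⟩
    rw [ncard_setOf_nint_add_fract_le] at this
    linarith
  rw [Fintype.card_fin] at hkey
  have hδε : δ ≤ 4 * ε + δ / 16 + ε * δ / 4 :=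
    le_of_mul_le_mul_right (by nlinarith) hN
  have hε5 : ε < δ / 5 := hεδ
  nlinarith [mul_lt_mul_of_pos_right hε5 hδ]
end

section
/- Let 𝒩₁ be a finite multiset of real numbers, 𝒳 a finite set, ρ > 0, c > 0, and suppose for each x ∈ 𝒳 there is β(x) ∈ ℝ with |{γ ∈ 𝒩₁ : ‖(log x / 2π)·γ + β(x)‖ ≤ ρ}| ≥ 2ρ(1+c)|𝒩₁|. Then for every positive integer k, (2ρ)^k (1+c)^k |𝒳|^k |𝒩₁| ≤ Σ_{x₁,…,x_k ∈ 𝒳} sup_{(β₁,…,β_k)∈ℝ^k} |{γ ∈ 𝒩₁ : ‖(log x_j / 2π)·γ + β_j‖ ≤ ρ for all 1 ≤ j ≤ k}|. -/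
/-!
Let `f γ` count the `x ∈ 𝒳` with `‖(log x / 2π) γ + β(x)‖ ≤ ρ`. Double counting turns the
hypothesis into `∑_γ f γ ≥ 2ρ(1+c) |𝒳| |𝒩₁|`, while choosing `βⱼ = β(xⱼ)` bounds the right-hand
side from below by `∑_γ (f γ)^k`, the number of pairs `(x₁, …, x_k; γ)` with every `xⱼ` counted by
`f γ`. Hölder's inequality `(∑_γ f γ)^k ≤ |𝒩₁|^(k-1) ∑_γ (f γ)^k` connects the two.
-/

open Finset

theorem Fintype.card_filter_piFinset_forall {α ι : Type*} [Fintype ι] [DecidableEq ι]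
    (s : Finset α) (p : α → Prop) [DecidablePred p]
    [DecidablePred fun xs : ι → α => ∀ i, p (xs i)] :
    #{xs ∈ piFinset (fun _ : ι => s) | ∀ i, p (xs i)} = #{x ∈ s | p x} ^ card ι := by
  have : {xs ∈ piFinset (fun _ : ι => s) | ∀ i, p (xs i)} = piFinset fun _ => {x ∈ s | p x} := by
    ext xs
    simp [forall_and]
  rw [this, card_piFinset, prod_const, card_univ]

namespace Multiset

variable {α β R : Type*}

theorem pow_sum_map_le_card_pow_mul_sum_map_pow [Semiring R] [LinearOrder R]
    [IsStrictOrderedRing R] [ExistsAddOfLE R] (m : Multiset α) {f : α → R}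
    (hf : ∀ a ∈ m, 0 ≤ f a) (n : ℕ) :
    (m.map f).sum ^ (n + 1) ≤ (card m : R) ^ n * (m.map fun a => f a ^ (n + 1)).sum := by
  classical
  have sum_eq (g : α → R) : (m.map g).sum = ∑ a : m.ToType, g a := by
    rw [Finset.sum_eq_multiset_sum, map_univ]
  rw [sum_eq, sum_eq, ← card_coe, ← card_univ]
  exact pow_sum_le_card_mul_sum_pow (fun a _ => hf _ coe_mem) n

theorem pow_mul_card_le_sum_map_pow [CommSemiring R] [LinearOrder R] [IsStrictOrderedRing R]
    [ExistsAddOfLE R] (m : Multiset α) {f : α → R} (hf : ∀ a ∈ m, 0 ≤ f a) {x : R}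
    (hx : 0 ≤ x) (hmean : x * card m ≤ (m.map f).sum) {k : ℕ} (hk : k ≠ 0) :
    x ^ k * card m ≤ (m.map fun a => f a ^ k).sum := by
  obtain ⟨n, rfl⟩ := Nat.exists_eq_add_one_of_ne_zero hk
  rcases (card m).eq_zero_or_pos with hm | hm
  · simp [card_eq_zero.1 hm]
  refine le_of_mul_le_mul_left ?_ (pow_pos (Nat.cast_pos.2 hm) n : (0 : R) < (card m : R) ^ n)
  calc (card m : R) ^ n * (x ^ (n + 1) * card m) = (x * card m) ^ (n + 1) := by ring
    _ ≤ (m.map f).sum ^ (n + 1) := by gcongr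
    _ ≤ (card m : R) ^ n * (m.map fun a => f a ^ (n + 1)).sum :=
      m.pow_sum_map_le_card_pow_mul_sum_map_pow hf n

theorem sum_card_filter_eq_sum_map_card_filter (m : Multiset α) (s : Finset β)
    (p : β → α → Prop) [∀ b a, Decidable (p b a)] :
    ∑ b ∈ s, card (m.filter (p b)) = (m.map fun a => #{b ∈ s | p b a}).sum := by
  induction m using Multiset.induction with
  | empty => simp
  | cons a m ih =>
    simp only [filter_cons, card_add, sum_add_distrib, ih, map_cons, sum_cons, apply_ite card,
      card_singleton, card_zero, Finset.card_filter]

theorem sum_card_filter_forall_eq_sum_map_pow (m : Multiset α) (s : Finset β)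
    (p : β → α → Prop) [∀ b a, Decidable (p b a)] (k : ℕ)
    [∀ (bs : Fin k → β) a, Decidable (∀ j, p (bs j) a)] :
    ∑ bs ∈ Fintype.piFinset (fun _ : Fin k => s), card (m.filter fun a => ∀ j, p (bs j) a) =
      (m.map fun a => #{b ∈ s | p b a} ^ k).sum := by
  rw [sum_card_filter_eq_sum_map_card_filter]
  refine congrArg sum (map_congr rfl fun a _ => ?_)
  rw [Fintype.card_filter_piFinset_forall s (p · a), Fintype.card_fin]

theorem card_filter_le_ciSup_card_filter {ι : Sort*} (m : Multiset α) (p : ι → α → Prop)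
    [∀ i, DecidablePred (p i)] (i : ι) : card (m.filter (p i)) ≤ ⨆ j, card (m.filter (p j)) :=
  le_ciSup ⟨card m, Set.forall_mem_range.2 fun _ => card_le_card (filter_le _ _)⟩ i

end Multiset

open Classical in
theorem stmt10 (𝒩 : Multiset ℝ) (𝒳 : Finset ℝ) (ρ c : ℝ) (hρ : 0 < ρ) (hc : 0 < c)
    (B : ℝ → ℝ)
    (h : ∀ x ∈ 𝒳, 2 * ρ * (1 + c) * (Multiset.card 𝒩 : ℝ) ≤
      ((𝒩.filter (fun γ => nint (Real.log x / (2 * Real.pi) * γ + B x) ≤ ρ)).card : ℝ)) :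
    ∀ k : ℕ, 0 < k →
      (2 * ρ) ^ k * (1 + c) ^ k * (𝒳.card : ℝ) ^ k * (Multiset.card 𝒩 : ℝ) ≤
      ∑ xs ∈ Fintype.piFinset (fun _ : Fin k => 𝒳),
        (((⨆ β : Fin k → ℝ,
          (𝒩.filter
            (fun γ => ∀ j, nint (Real.log (xs j) / (2 * Real.pi) * γ + β j) ≤ ρ)).card) : ℕ) : ℝ) := by
  intro k hk
  set P : ℝ → ℝ → Prop := fun x γ => nint (Real.log x / (2 * Real.pi) * γ + B x) ≤ ρ
  have hmean : 2 * ρ * (1 + c) * #𝒳 * Multiset.card 𝒩 ≤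
      (𝒩.map fun γ => (#{x ∈ 𝒳 | P x γ} : ℝ)).sum := by
    calc _ = ∑ _x ∈ 𝒳, 2 * ρ * (1 + c) * (Multiset.card 𝒩 : ℝ) := by
          rw [sum_const, nsmul_eq_mul]; ring
      _ ≤ ∑ x ∈ 𝒳, ((𝒩.filter (P x)).card : ℝ) := sum_le_sum h
      _ = _ := by
        rw [← Nat.cast_sum, 𝒩.sum_card_filter_eq_sum_map_card_filter, Nat.cast_multiset_sum,
          Multiset.map_map]
        rfl
  have hmoment : ∑ xs ∈ Fintype.piFinset (fun _ : Fin k => 𝒳),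
      ((𝒩.filter fun γ => ∀ j, P (xs j) γ).card : ℝ) =
      (𝒩.map fun γ => (#{x ∈ 𝒳 | P x γ} : ℝ) ^ k).sum := by
    rw [← Nat.cast_sum, 𝒩.sum_card_filter_forall_eq_sum_map_pow, Nat.cast_multiset_sum,
      Multiset.map_map]
    simp only [Function.comp_def, Nat.cast_pow]
  calc (2 * ρ) ^ k * (1 + c) ^ k * (#𝒳 : ℝ) ^ k * Multiset.card 𝒩
      = (2 * ρ * (1 + c) * #𝒳) ^ k * Multiset.card 𝒩 := by simp only [mul_pow]
    _ ≤ (𝒩.map fun γ => (#{x ∈ 𝒳 | P x γ} : ℝ) ^ k).sum :=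
      𝒩.pow_mul_card_le_sum_map_pow (fun _ _ => by positivity) (by positivity) hmean hk.ne'
    _ = _ := hmoment.symm
    _ ≤ _ := by
      gcongr with xs
      norm_cast
      exact 𝒩.card_filter_le_ciSup_card_filter
        (fun β γ => ∀ j, nint (Real.log (xs j) / (2 * Real.pi) * γ + β j) ≤ ρ) fun j => B (xs j)
end

section
/- Let 𝒩 ⊆ [0,∞) be a multiset of nonnegative reals, T ≥ 2, K ≥ 1, and suppose there is a constant D such that |{(γ,γ') ∈ (𝒩∩[0,T])² : |γ−γ'| ≤ 2/log T}| ≤ D·T log T. Then 𝒩 admits a disjoint partition 𝒩 = 𝒩₁ ∪ 𝒩₂ such that |𝒩₂ ∩ [0,T]| ≤ (2πD/(C·K))·(T log T)/(2π) for a suitable constant C (so |𝒩₂∩[0,T]| can be made ≤ N(T)/(200K) when N(T) ∼ T log T/(2π)), and every interval I ⊆ [0,T] of length at most 1/log T satisfies |𝒩₁ ∩ I| ≤ C·K. -/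
open Classical in
/-- card of filtered product equals sum of per-element counts. -/
private lemma prod_filter_card (t : Multiset ℝ) (Q : ℝ × ℝ → Prop) :
    ∀ s : Multiset ℝ, (((s ×ˢ t).filter Q).card)
      = (s.map (fun a => ((t.filter (fun b => Q (a, b))).card))).sum := by
  refine Multiset.induction ?_ ?_
  · simp [Multiset.zero_product]
  · intro a s ih
    rw [Multiset.cons_product, Multiset.filter_add, Multiset.card_add, ih,
      Multiset.map_cons, Multiset.sum_cons, Multiset.filter_map, Multiset.card_map]
    rfl

open Classical in
theorem stmt11 : ∃ C : ℝ, 0 < C ∧ ∀ (𝒩 : Multiset ℝ) (T K D : ℝ),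
    2 ≤ T → 1 ≤ K → 0 ≤ D →
    (∀ γ ∈ 𝒩, 0 ≤ γ) →
    ((((𝒩.filter (· ∈ Set.Icc 0 T)) ×ˢ (𝒩.filter (· ∈ Set.Icc 0 T))).filter
        (fun p => |p.1 - p.2| ≤ 2 / Real.log T)).card : ℝ) ≤ D * T * Real.log T →
    ∃ 𝒩₁ 𝒩₂ : Multiset ℝ, 𝒩 = 𝒩₁ + 𝒩₂ ∧
      (((𝒩₂.filter (· ∈ Set.Icc 0 T)).card : ℝ)
        ≤ (2 * Real.pi * D / (C * K)) * (T * Real.log T / (2 * Real.pi))) ∧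
      (∀ a b : ℝ, 0 ≤ a → b ≤ T → b - a ≤ 1 / Real.log T →
        ((𝒩₁.filter (· ∈ Set.Icc a b)).card : ℝ) ≤ C * K) := by
  refine ⟨1, one_pos, ?_⟩
  intro 𝒩 T K D hT hK hD hpos hpairs
  have hK0 : (0:ℝ) < K := lt_of_lt_of_le one_pos hK
  have hlog : 0 < Real.log T := Real.log_pos (by linarith)
  set A : Multiset ℝ := 𝒩.filter (· ∈ Set.Icc 0 T) with hA
  -- count of close partners in A
  set cnt : ℝ → ℕ := fun a => (A.filter (fun b => |a - b| ≤ 2 / Real.log T)).card with hcnt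
  set P : ℝ → Prop := fun γ => γ ∈ Set.Icc (0:ℝ) T ∧ K < (cnt γ : ℝ) with hP
  refine ⟨𝒩.filter (fun γ => ¬ P γ), 𝒩.filter P, ?_, ?_, ?_⟩
  · rw [add_comm, Multiset.filter_add_not]
  · -- bound on 𝒩₂
    have h2sub : 𝒩.filter P ≤ A := by
      apply Multiset.monotone_filter_right
      intro γ hγ; exact hγ.1
    have hfe : (𝒩.filter P).filter (· ∈ Set.Icc 0 T) = 𝒩.filter P := by
      rw [Multiset.filter_eq_self]
      intro γ hγ
      exact (Multiset.of_mem_filter hγ).1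
    rw [hfe]
    have key : K * (((𝒩.filter P).card : ℝ))
        ≤ ((((𝒩.filter P) ×ˢ A).filter (fun p => |p.1 - p.2| ≤ 2 / Real.log T)).card : ℝ) := by
      rw [prod_filter_card]
      have := Multiset.card_nsmul_le_sum (s := (𝒩.filter P).map (fun a => ((cnt a : ℝ)))) (a := K)
        (by
          intro x hx
          obtain ⟨γ, hγ, rfl⟩ := Multiset.mem_map.1 hx
          exact le_of_lt (Multiset.of_mem_filter hγ).2)
      rw [Multiset.card_map, nsmul_eq_mul] at this
      rw [mul_comm K]
      refine le_trans this (le_of_eq ?_)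
      push_cast
      rw [Multiset.map_map]
      rfl
    have hle : ((((𝒩.filter P) ×ˢ A).filter (fun p => |p.1 - p.2| ≤ 2 / Real.log T)).card : ℝ)
        ≤ (((A ×ˢ A).filter (fun p => |p.1 - p.2| ≤ 2 / Real.log T)).card : ℝ) := by
      have : ((𝒩.filter P) ×ˢ A) ≤ A ×ˢ A := by
        obtain ⟨u, hu⟩ := Multiset.le_iff_exists_add.1 h2sub
        rw [hu, Multiset.add_product]
        exact Multiset.le_add_right _ _
      exact_mod_cast Multiset.card_le_card (Multiset.filter_le_filter _ this)
    have hDK : K * (((𝒩.filter P).card : ℝ)) ≤ D * T * Real.log T :=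
      le_trans key (le_trans hle hpairs)
    have heq : (2 * Real.pi * D / (1 * K)) * (T * Real.log T / (2 * Real.pi))
        = D * T * Real.log T / K := by
      field_simp
    rw [heq, le_div_iff₀ hK0]
    linarith
  · -- interval bound
    intro a b ha hb hlen
    by_cases hne : ∃ γ ∈ 𝒩.filter (fun γ => ¬ P γ), γ ∈ Set.Icc a b
    · obtain ⟨γ, hγ1, hγ2⟩ := hne
      have hγN : γ ∈ 𝒩 := Multiset.mem_of_mem_filter hγ1
      have hγnp : ¬ P γ := (Multiset.mem_filter.1 hγ1).2
      have hγIcc : γ ∈ Set.Icc (0:ℝ) T := ⟨le_trans ha hγ2.1, le_trans hγ2.2 hb⟩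
      have hcntK : (cnt γ : ℝ) ≤ K := by
        by_contra h
        exact hγnp ⟨hγIcc, lt_of_not_ge h⟩
      have hsub : (𝒩.filter (fun γ => ¬ P γ)).filter (· ∈ Set.Icc a b)
          ≤ A.filter (fun b' => |γ - b'| ≤ 2 / Real.log T) := by
        have h1 : (𝒩.filter (fun γ => ¬ P γ)).filter (· ∈ Set.Icc a b)
            ≤ 𝒩.filter (· ∈ Set.Icc a b) :=
          Multiset.filter_le_filter _ (Multiset.filter_le _ _)
        refine le_trans h1 ?_
        rw [hA, Multiset.filter_filter]
        apply Multiset.monotone_filter_right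
        intro x hx
        refine ⟨?_, ⟨le_trans ha hx.1, le_trans hx.2 hb⟩⟩
        have h1 : |γ - x| ≤ b - a := by
          rw [abs_le]
          constructor <;> linarith [hγ2.1, hγ2.2, hx.1, hx.2]
        refine le_trans h1 (le_trans hlen ?_)
        rw [div_le_div_iff₀ hlog hlog]
        nlinarith [hlog]
      have := Multiset.card_le_card hsub
      rw [one_mul]
      calc (((𝒩.filter (fun γ => ¬ P γ)).filter (· ∈ Set.Icc a b)).card : ℝ)
          ≤ (cnt γ : ℝ) := by exact_mod_cast this
        _ ≤ K := hcntK
    · push_neg at hne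
      have : (𝒩.filter (fun γ => ¬ P γ)).filter (· ∈ Set.Icc a b) = 0 := by
        rw [Multiset.filter_eq_nil]
        exact hne
      rw [this]
      simp
      positivity
end
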